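/- arXiv:1301.1443 — 4 statements merged into one kernel-verified Lean document; each statement's English description precedes it below -/
import Mathlib

section
/- Let C be an additive category. Define the category C_Q to have the same objects as C and morphisms Hom_{C_Q}(E,F) = Hom_C(E,F) ⊗_Z Q. Then C_Q is the localization of C at the class of isogenies, i.e. at the morphisms u : M → N such that there exist a morphism v : N → M and a nonzero integer n with v∘u = n·id_M and u∘v = n·id_N. -/
/-!
Every `z : Hom(X, Y) ⊗ ℚ` has a presentation `s • z = m ⊗ 1` with `s ≠ 0`, i.e.
`z = Q m ≫ (Q (s • 𝟙))⁻¹` with `Q = QFunctor C`, and two presentations `(s, m)`, `(s', m')`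
of the same `z` satisfy `c s' m = c s m'` for some `c ≠ 0`. A functor `F` inverting isogenies
inverts every `s • 𝟙`, so `z ↦ F m ≫ (F (s • 𝟙))⁻¹` is well defined and functorial; any lift
of `F` must take this value on `z`, which gives uniqueness.
-/

open CategoryTheory TensorProduct

universe v u

variable (C : Type u) [Category.{v} C] [Preadditive C]

/-- Isogenies in an additive category: morphisms `u : M ⟶ N` admitting `v : N ⟶ M`
and a nonzero integer `n` with `v∘u = n·id_M` and `u∘v = n·id_N`. -/
def Isogenies : CategoryTheory.MorphismProperty C :=
  fun M N u => ∃ (v : N ⟶ M) (n : ℤ), n ≠ 0 ∧ u ≫ v = n • 𝟙 M ∧ v ≫ u = n • 𝟙 N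

/-- The category `C_ℚ` of objects of `C` up to isogeny: same objects,
morphisms `Hom(E,F) ⊗_ℤ ℚ`. -/
structure CQ where
  /-- the underlying object -/
  obj : C

variable {C}

/-- Composition, bilinear over the pure-tensor formula `(f⊗q) ≫ (g⊗r) = (f≫g)⊗(qr)`. -/
noncomputable def CQ.comp {X Y Z : CQ C}
    (x : (X.obj ⟶ Y.obj) ⊗[ℤ] ℚ) (y : (Y.obj ⟶ Z.obj) ⊗[ℤ] ℚ) :
    (X.obj ⟶ Z.obj) ⊗[ℤ] ℚ :=
  (TensorProduct.map
      (TensorProduct.lift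
        { toFun := fun f =>
            { toFun := fun g => f ≫ g
              map_add' := fun g g' => Preadditive.comp_add _ _ _ _ _ _
              map_smul' := fun n g => by simp }
          map_add' := fun f f' => by ext g; simp [Preadditive.add_comp]
          map_smul' := fun n f => by ext g; simp })
      (LinearMap.mul' ℤ ℚ))
    ((TensorProduct.tensorTensorTensorComm ℤ (X.obj ⟶ Y.obj) ℚ (Y.obj ⟶ Z.obj) ℚ)
      (x ⊗ₜ y))

theorem CQ.comp_zero_left {X Y Z : CQ C} (y : (Y.obj ⟶ Z.obj) ⊗[ℤ] ℚ) :
    CQ.comp (X := X) (0 : (X.obj ⟶ Y.obj) ⊗[ℤ] ℚ) y = 0 := by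
  simp [CQ.comp]

theorem CQ.comp_zero_right {X Y Z : CQ C} (x : (X.obj ⟶ Y.obj) ⊗[ℤ] ℚ) :
    CQ.comp (Z := Z) x (0 : (Y.obj ⟶ Z.obj) ⊗[ℤ] ℚ) = 0 := by
  simp [CQ.comp]

theorem CQ.comp_add_left {X Y Z : CQ C} (a b : (X.obj ⟶ Y.obj) ⊗[ℤ] ℚ)
    (y : (Y.obj ⟶ Z.obj) ⊗[ℤ] ℚ) :
    CQ.comp (a + b) y = CQ.comp a y + CQ.comp b y := by
  simp [CQ.comp, add_tmul]

theorem CQ.comp_add_right {X Y Z : CQ C} (x : (X.obj ⟶ Y.obj) ⊗[ℤ] ℚ)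
    (a b : (Y.obj ⟶ Z.obj) ⊗[ℤ] ℚ) :
    CQ.comp (x) (a + b) = CQ.comp x a + CQ.comp x b := by
  simp [CQ.comp, tmul_add]

theorem CQ.comp_tmul {X Y Z : CQ C} (f : X.obj ⟶ Y.obj) (q : ℚ)
    (g : Y.obj ⟶ Z.obj) (r : ℚ) :
    CQ.comp (f ⊗ₜ q) (g ⊗ₜ r) = (f ≫ g) ⊗ₜ[ℤ] (q * r) := by
  simp [CQ.comp]

noncomputable instance : Category (CQ C) where
  Hom X Y := (X.obj ⟶ Y.obj) ⊗[ℤ] ℚ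
  id X := 𝟙 X.obj ⊗ₜ (1 : ℚ)
  comp := CQ.comp
  id_comp := by
    intro X Y f
    show CQ.comp _ _ = _
    induction f using TensorProduct.induction_on with
    | zero => simp [CQ.comp]
    | tmul g r => simp [CQ.comp]
    | add a b ha hb =>
      rw [CQ.comp_add_right, ha, hb]
  comp_id := by
    intro X Y f
    show CQ.comp _ _ = _
    induction f using TensorProduct.induction_on with
    | zero => simp [CQ.comp]
    | tmul g r => simp [CQ.comp]
    | add a b ha hb =>
      rw [CQ.comp_add_left, ha, hb]
  assoc := by
    intro W X Y Z f g h
    show CQ.comp (CQ.comp f g) h = CQ.comp f (CQ.comp g h)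
    induction f using TensorProduct.induction_on with
    | zero => rw [CQ.comp_zero_left, CQ.comp_zero_left, CQ.comp_zero_left]
    | add a b ha hb =>
      rw [CQ.comp_add_left, CQ.comp_add_left, CQ.comp_add_left, ha, hb]
    | tmul f q =>
      induction g using TensorProduct.induction_on with
      | zero => rw [CQ.comp_zero_right, CQ.comp_zero_left, CQ.comp_zero_left,
          CQ.comp_zero_right]
      | add a b ha hb =>
        rw [CQ.comp_add_right, CQ.comp_add_left, CQ.comp_add_left, ha, hb,
          CQ.comp_add_right]
      | tmul g r =>
        induction h using TensorProduct.induction_on with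
        | zero => rw [CQ.comp_zero_right, CQ.comp_zero_right, CQ.comp_zero_right]
        | add a b ha hb =>
          rw [CQ.comp_add_right, CQ.comp_add_right, ha, hb, CQ.comp_add_right]
        | tmul h s =>
          rw [CQ.comp_tmul, CQ.comp_tmul, CQ.comp_tmul, CQ.comp_tmul,
            Category.assoc, mul_assoc]

/-- The localization functor `C ⥤ C_ℚ`. -/
noncomputable def QFunctor (C : Type u) [Category.{v} C] [Preadditive C] :
    C ⥤ CQ C where
  obj X := ⟨X⟩
  map f := f ⊗ₜ (1 : ℚ)
  map_id X := rfl
  map_comp := by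
    intro X Y Z f g
    show _ = CQ.comp _ _
    simp [CQ.comp]

section RatTensor

variable {M : Type*} [AddCommGroup M]

instance TensorProduct.isLocalizedModule_tmul_one :
    IsLocalizedModule (nonZeroDivisors ℤ) ((mk ℤ M ℚ).flip 1) := by
  have h : (mk ℤ M ℚ).flip 1 = (TensorProduct.comm ℤ ℚ M).toLinearMap ∘ₗ mk ℤ ℚ M 1 := by
    ext; rfl
  rw [h]
  infer_instance

lemma TensorProduct.exists_zsmul_eq_tmul_one (z : M ⊗[ℤ] ℚ) :
    ∃ (s : ℤ) (m : M), s ≠ 0 ∧ s • z = m ⊗ₜ 1 := by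
  obtain ⟨⟨m, s⟩, hs⟩ := IsLocalizedModule.surj (nonZeroDivisors ℤ) ((mk ℤ M ℚ).flip 1) z
  exact ⟨s, m, nonZeroDivisors.coe_ne_zero s, hs⟩

lemma TensorProduct.exists_zsmul_eq_of_tmul_one_eq {m m' : M}
    (h : m ⊗ₜ[ℤ] (1 : ℚ) = m' ⊗ₜ 1) : ∃ c : ℤ, c ≠ 0 ∧ c • m = c • m' := by
  obtain ⟨c, hc⟩ := IsLocalizedModule.exists_of_eq (S := nonZeroDivisors ℤ)
    (f := (mk ℤ M ℚ).flip 1) h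
  exact ⟨c, nonZeroDivisors.coe_ne_zero c, hc⟩

lemma TensorProduct.zsmul_tmul_inv {m : M} {n : ℤ} (hn : n ≠ 0) :
    (n • m) ⊗ₜ[ℤ] (n : ℚ)⁻¹ = m ⊗ₜ 1 := by
  rw [smul_tmul, zsmul_eq_mul, mul_inv_cancel₀ (Int.cast_ne_zero.2 hn)]

end RatTensor

lemma isogenies_zsmul_id {n : ℤ} (hn : n ≠ 0) (X : C) : Isogenies C (n • 𝟙 X) :=
  ⟨𝟙 X, n, hn, by simp, by simp⟩

namespace CategoryTheory.Functor

variable {E : Type*} [Category E] (F : C ⥤ E)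

lemma map_comp_map_zsmul_id {X Y : C} (f : X ⟶ Y) (n : ℤ) :
    F.map f ≫ F.map (n • 𝟙 Y) = F.map (n • f) := by
  rw [← F.map_comp, Preadditive.comp_zsmul, Category.comp_id]

lemma map_zsmul_id_comp_map {X Y : C} (f : X ⟶ Y) (n : ℤ) :
    F.map (n • 𝟙 X) ≫ F.map f = F.map (n • f) := by
  rw [← F.map_comp, Preadditive.zsmul_comp, Category.id_comp]

lemma map_zsmul_id_mul (X : C) (a b : ℤ) :
    F.map ((a * b) • 𝟙 X) = F.map (a • 𝟙 X) ≫ F.map (b • 𝟙 X) := by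
  rw [map_comp_map_zsmul_id, smul_smul, mul_comm]

end CategoryTheory.Functor

lemma isIso_map_zsmul_id {E : Type*} [Category E] {F : C ⥤ E}
    (hF : (Isogenies C).IsInvertedBy F) {n : ℤ} (hn : n ≠ 0) (X : C) : IsIso (F.map (n • 𝟙 X)) :=
  hF _ (isogenies_zsmul_id hn X)

lemma qFunctor_inverts : (Isogenies C).IsInvertedBy (QFunctor C) := by
  rintro X Y u ⟨v, n, hn, huv, hvu⟩
  refine ⟨⟨v ⊗ₜ (n : ℚ)⁻¹, ?_, ?_⟩⟩
  · change CQ.comp (u ⊗ₜ (1 : ℚ)) (v ⊗ₜ (n : ℚ)⁻¹) = 𝟙 X ⊗ₜ 1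
    rw [CQ.comp_tmul, one_mul, huv, zsmul_tmul_inv hn]
  · change CQ.comp (v ⊗ₜ (n : ℚ)⁻¹) (u ⊗ₜ (1 : ℚ)) = 𝟙 Y ⊗ₜ 1
    rw [CQ.comp_tmul, mul_one, hvu, zsmul_tmul_inv hn]

namespace CQ

variable {X Y Z : CQ C}

lemma comp_zsmul_zsmul (x : (X.obj ⟶ Y.obj) ⊗[ℤ] ℚ) (y : (Y.obj ⟶ Z.obj) ⊗[ℤ] ℚ) (s t : ℤ) :
    CQ.comp (s • x) (t • y) = (s * t) • CQ.comp x y := by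
  unfold CQ.comp
  rw [smul_tmul_smul, LinearEquiv.map_smul, LinearMap.map_smul]

lemma comp_zsmul_id_tmul_one (x : (X.obj ⟶ Y.obj) ⊗[ℤ] ℚ) (s : ℤ) :
    CQ.comp (Z := Y) x ((s • 𝟙 Y.obj) ⊗ₜ 1) = s • x := by
  calc CQ.comp x ((s • 𝟙 Y.obj) ⊗ₜ 1) = CQ.comp ((1 : ℤ) • x) (s • (𝟙 Y.obj ⊗ₜ 1)) := by
        rw [one_smul, smul_tmul']
    _ = s • x := by
        rw [comp_zsmul_zsmul, one_mul]
        exact congrArg (s • ·) (Category.comp_id (X := X) (Y := Y) x)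

section Lift

open MorphismProperty

variable {E : Type*} [Category E] (F : C ⥤ E) (hF : (Isogenies C).IsInvertedBy F)

include hF in
lemma exists_comp_map_zsmul_id_eq {X Y : C} (z : (X ⟶ Y) ⊗[ℤ] ℚ) :
    ∃ φ : F.obj X ⟶ F.obj Y, ∀ (s : ℤ) (m : X ⟶ Y), s ≠ 0 → s • z = m ⊗ₜ 1 →
      φ ≫ F.map (s • 𝟙 Y) = F.map m := by
  obtain ⟨s₀, m₀, hs₀, hz₀⟩ := exists_zsmul_eq_tmul_one z
  let φ := (LeftFraction.mk m₀ (s₀ • 𝟙 Y) (isogenies_zsmul_id hs₀ Y)).map F hF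
  have hφ : φ ≫ F.map (s₀ • 𝟙 Y) = F.map m₀ := LeftFraction.map_comp_map_s _ _ _
  refine ⟨φ, fun s m hs hz => ?_⟩
  obtain ⟨c, hc, hcm⟩ : ∃ c : ℤ, c ≠ 0 ∧ c • s₀ • m = c • s • m₀ := by
    refine exists_zsmul_eq_of_tmul_one_eq ?_
    rw [← smul_tmul', ← smul_tmul', ← hz, ← hz₀, smul_comm]
  have := isIso_map_zsmul_id hF (mul_ne_zero hc hs₀) Y
  rw [← cancel_mono (F.map ((c * s₀) • 𝟙 Y))]
  calc (φ ≫ F.map (s • 𝟙 Y)) ≫ F.map ((c * s₀) • 𝟙 Y)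
      = (φ ≫ F.map (s₀ • 𝟙 Y)) ≫ F.map ((c * s) • 𝟙 Y) := by
        rw [Category.assoc, Category.assoc, ← F.map_zsmul_id_mul, ← F.map_zsmul_id_mul]
        congr 3
        ring
    _ = F.map ((c * s₀) • m) := by
        rw [hφ, F.map_comp_map_zsmul_id, mul_smul, ← hcm, mul_smul]
    _ = F.map m ≫ F.map ((c * s₀) • 𝟙 Y) := (F.map_comp_map_zsmul_id m _).symm

/-- `F m ≫ (F (s • 𝟙))⁻¹` for any presentation `s • z = m ⊗ 1` with `s ≠ 0`; by
`exists_comp_map_zsmul_id_eq` this does not depend on the presentation. -/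
noncomputable def liftHom {X Y : C} (z : (X ⟶ Y) ⊗[ℤ] ℚ) : F.obj X ⟶ F.obj Y :=
  (exists_comp_map_zsmul_id_eq F hF z).choose

variable {F hF}

lemma liftHom_comp_map_zsmul_id {X Y : C} {z : (X ⟶ Y) ⊗[ℤ] ℚ} {s : ℤ} {m : X ⟶ Y}
    (hs : s ≠ 0) (hz : s • z = m ⊗ₜ 1) : liftHom F hF z ≫ F.map (s • 𝟙 Y) = F.map m :=
  (exists_comp_map_zsmul_id_eq F hF z).choose_spec s m hs hz

lemma liftHom_eq_of_comp_map_zsmul_id {X Y : C} {z : (X ⟶ Y) ⊗[ℤ] ℚ} {s : ℤ} {m : X ⟶ Y}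
    (hs : s ≠ 0) (hz : s • z = m ⊗ₜ 1) {φ : F.obj X ⟶ F.obj Y}
    (hφ : φ ≫ F.map (s • 𝟙 Y) = F.map m) : liftHom F hF z = φ := by
  have := isIso_map_zsmul_id hF hs Y
  rw [← cancel_mono (F.map (s • 𝟙 Y)), liftHom_comp_map_zsmul_id hs hz, hφ]

lemma liftHom_tmul_one {X Y : C} (m : X ⟶ Y) : liftHom F hF (m ⊗ₜ 1) = F.map m :=
  liftHom_eq_of_comp_map_zsmul_id one_ne_zero (one_smul ℤ _) (by simp)

variable (F hF)

noncomputable def liftFunctor : CQ C ⥤ E where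
  obj X := F.obj X.obj
  map z := liftHom F hF z
  map_id X := by
    change liftHom F hF (𝟙 X.obj ⊗ₜ 1) = 𝟙 _
    rw [liftHom_tmul_one, F.map_id]
  map_comp {X Y Z} f g := by
    obtain ⟨s, m, hs, hf⟩ := exists_zsmul_eq_tmul_one (f : (X.obj ⟶ Y.obj) ⊗[ℤ] ℚ)
    obtain ⟨t, n, ht, hg⟩ := exists_zsmul_eq_tmul_one (g : (Y.obj ⟶ Z.obj) ⊗[ℤ] ℚ)
    have hfg : (t * s) • CQ.comp f g = (m ≫ n) ⊗ₜ 1 := by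
      rw [mul_comm, ← comp_zsmul_zsmul, hf, hg, comp_tmul, mul_one]
    refine liftHom_eq_of_comp_map_zsmul_id (mul_ne_zero ht hs) hfg ?_
    rw [F.map_zsmul_id_mul, Category.assoc, reassoc_of% (liftHom_comp_map_zsmul_id ht hg),
      F.map_comp_map_zsmul_id, ← F.map_zsmul_id_comp_map,
      reassoc_of% (liftHom_comp_map_zsmul_id hs hf), F.map_comp]

end Lift

lemma eq_liftFunctor {E : Type*} [Category E] (G : CQ C ⥤ E) :
    G = liftFunctor (QFunctor C ⋙ G) (qFunctor_inverts.of_comp _ _ G) := by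
  refine Functor.hext (fun _ => rfl) (fun X Y f => heq_of_eq ?_)
  obtain ⟨s, m, hs, hf⟩ := exists_zsmul_eq_tmul_one (f : (X.obj ⟶ Y.obj) ⊗[ℤ] ℚ)
  have hfs : f ≫ (QFunctor C).map (s • 𝟙 Y.obj) = (QFunctor C).map m :=
    (comp_zsmul_id_tmul_one f s).trans hf
  have hG : G.map f ≫ (QFunctor C ⋙ G).map (s • 𝟙 Y.obj) = (QFunctor C ⋙ G).map m :=
    (G.map_comp _ _).symm.trans (congrArg G.map hfs)
  exact (liftHom_eq_of_comp_map_zsmul_id (hF := qFunctor_inverts.of_comp _ _ G) hs hf hG).symm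

noncomputable def strictUniversalPropertyFixedTarget (E : Type*) [Category E] :
    Localization.StrictUniversalPropertyFixedTarget (QFunctor C) (Isogenies C) E where
  inverts := qFunctor_inverts
  lift := liftFunctor
  fac F hF := Functor.hext (fun _ => rfl) (fun _ _ m => heq_of_eq (liftHom_tmul_one (hF := hF) m))
  uniq F₁ F₂ h := by
    rw [eq_liftFunctor F₁, eq_liftFunctor F₂]
    congr 1

end CQ

theorem statement0 (C : Type u) [Category.{v} C] [Preadditive C] :
    (QFunctor C).IsLocalization (Isogenies C) :=
  .mk' _ _ (CQ.strictUniversalPropertyFixedTarget _) (CQ.strictUniversalPropertyFixedTarget _)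
end

section
/- Let A be a commutative ring, B a commutative A-algebra, λ ∈ A, and (M, ∇) a module with λ-connection relative to B/A, meaning ∇ : M → Ω¹_{B/A} ⊗_B M is A-linear and satisfies ∇(xs) = λ·d(x)⊗s + x·∇(s) for x ∈ B, s ∈ M. Suppose there is an A-module E and a B-linear isomorphism γ : E ⊗_A B ≅ Ω¹_{B/A} such that d(γ(ω⊗1)) = 0 in Ω²_{B/A} for every ω ∈ E. Then the λ-connection ∇ is integrable (∇∘∇ = 0 on the induced extension to forms) if and only if the induced map θ : M → E ⊗_A M obtained from ∇ via γ satisfies θ∧θ = 0, i.e. θ is an A-Higgs field on M with coefficients in E. -/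
/-!
Under `ι`, a generator `e ⊗ m` becomes `γ(1 ⊗ e) ⊗ m`, and `γ(1 ⊗ e)` is closed, so
`∇₁(γ(1 ⊗ e) ⊗ m) = -γ(1 ⊗ e) ∧ ∇m`, which is `-j(Θ(e ⊗ m))` by the compatibility of the two
wedge products. Hence `∇₁ ∘ ∇ = ∇₁ ∘ ι ∘ θ = -j ∘ Θ ∘ θ`, and `j` is injective.
-/

open TensorProduct

section

variable {A B : Type*} [CommRing A] [CommRing B] [Algebra A B]
  {M : Type*} [AddCommGroup M] [Module B M] [Module A M]
  {Ω1 Ω2 : Type*} [AddCommGroup Ω1] [Module B Ω1] [Module A Ω1] [IsScalarTower A B Ω1]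
  [AddCommGroup Ω2] [Module B Ω2] [Module A Ω2] [IsScalarTower A B Ω2]
  {E Λ2E : Type*} [AddCommGroup E] [Module A E] [AddCommGroup Λ2E] [Module A Λ2E]
  {wedge : Ω1 →ₗ[B] Ω1 →ₗ[B] Ω2} {wE : E →ₗ[A] E →ₗ[A] Λ2E} {c : E → Ω1}
  {ι : E ⊗[A] M →ₗ[A] Ω1 ⊗[B] M} {j : Λ2E ⊗[A] M →ₗ[A] Ω2 ⊗[B] M}

theorem rTensor_wedge_ι_eq_j_rTensor_wE (hι : ∀ (e : E) (m : M), ι (e ⊗ₜ m) = c e ⊗ₜ m)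
    (hj : ∀ (e f : E) (m : M), j (wE e f ⊗ₜ m) = wedge (c e) (c f) ⊗ₜ m)
    (e : E) (s : E ⊗[A] M) :
    LinearMap.rTensor M (wedge (c e)) (ι s) = j (LinearMap.rTensor M (wE e) s) := by
  induction s using TensorProduct.induction_on with
  | zero => simp
  | tmul f n => simp [hι, hj]
  | add x y hx hy => simp only [map_add, hx, hy]

theorem nab1_ι_eq_neg_j_Θ {lam : A} {d1 : Ω1 →ₗ[A] Ω2} {nab : M →ₗ[A] Ω1 ⊗[B] M}
    {nab1 : Ω1 ⊗[B] M →ₗ[A] Ω2 ⊗[B] M} {θ : M →ₗ[A] E ⊗[A] M}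
    {Θ : E ⊗[A] M →ₗ[A] Λ2E ⊗[A] M}
    (hclosed : ∀ e : E, d1 (c e) = 0)
    (hnab1 : ∀ (ω : Ω1) (m : M),
      nab1 (ω ⊗ₜ m) = algebraMap A B lam • (d1 ω ⊗ₜ m) - LinearMap.rTensor M (wedge ω) (nab m))
    (hι : ∀ (e : E) (m : M), ι (e ⊗ₜ m) = c e ⊗ₜ m) (hθ : ∀ m : M, ι (θ m) = nab m)
    (hΘ : ∀ (e : E) (m : M), Θ (e ⊗ₜ m) = LinearMap.rTensor M (wE e) (θ m))
    (hj : ∀ (e f : E) (m : M), j (wE e f ⊗ₜ m) = wedge (c e) (c f) ⊗ₜ m)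
    (t : E ⊗[A] M) :
    nab1 (ι t) = -j (Θ t) := by
  induction t using TensorProduct.induction_on with
  | zero => simp
  | tmul e m =>
    rw [hι, hnab1, hclosed, hΘ, ← hθ, rTensor_wedge_ι_eq_j_rTensor_wE hι hj]
    simp
  | add x y hx hy => simp only [map_add, hx, hy, neg_add]

end

theorem statement4_general (A B : Type*) [CommRing A] [CommRing B] [Algebra A B]
    (lam : A)
    (M : Type*) [AddCommGroup M] [Module B M] [Module A M] [IsScalarTower A B M]
    (Ω1 Ω2 : Type*) [AddCommGroup Ω1] [Module B Ω1] [Module A Ω1]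
    [IsScalarTower A B Ω1] [AddCommGroup Ω2] [Module B Ω2] [Module A Ω2]
    [IsScalarTower A B Ω2]
    (wedge : Ω1 →ₗ[B] Ω1 →ₗ[B] Ω2)
    (d1 : Ω1 →ₗ[A] Ω2)
    (E Λ2E : Type*) [AddCommGroup E] [Module A E] [AddCommGroup Λ2E]
    [Module A Λ2E]
    (wE : E →ₗ[A] E →ₗ[A] Λ2E)
    -- γ : E ⊗_A B ≅ Ω1, carrying the constant forms to closed forms
    (γ : (B ⊗[A] E) ≃ₗ[B] Ω1)
    (hγ : ∀ e : E, d1 (γ (1 ⊗ₜ e)) = 0)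
    -- the λ-connection
    (nab : M →ₗ[A] Ω1 ⊗[B] M)
    -- its extension to 1-forms
    (nab1 : Ω1 ⊗[B] M →ₗ[A] Ω2 ⊗[B] M)
    (hnab1 : ∀ (ω : Ω1) (m : M),
      nab1 (ω ⊗ₜ m) = algebraMap A B lam • (d1 ω ⊗ₜ m)
        - (LinearMap.rTensor M (wedge ω)) (nab m))
    -- the Higgs field induced from ∇ via γ
    (ι : (E ⊗[A] M) →ₗ[A] (Ω1 ⊗[B] M))
    (hι : ∀ (e : E) (m : M), ι (e ⊗ₜ m) = γ (1 ⊗ₜ e) ⊗ₜ m)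
    (θ : M →ₗ[A] E ⊗[A] M)
    (hθ : ∀ m : M, ι (θ m) = nab m)
    -- the wedge-extension of θ
    (Θ : (E ⊗[A] M) →ₗ[A] (Λ2E ⊗[A] M))
    (hΘ : ∀ (e : E) (m : M),
      Θ (e ⊗ₜ m) = (LinearMap.rTensor M (wE e)) (θ m))
    -- compatibility of the two wedge products under γ
    (j : (Λ2E ⊗[A] M) →ₗ[A] (Ω2 ⊗[B] M))
    (hj : ∀ (e f : E) (m : M),
      j ((wE e f) ⊗ₜ m) = (wedge (γ (1 ⊗ₜ e)) (γ (1 ⊗ₜ f))) ⊗ₜ m)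
    (hjinj : Function.Injective j) :
    -- ∇ is integrable iff θ is a Higgs field
    (∀ m : M, nab1 (nab m) = 0) ↔ (∀ m : M, Θ (θ m) = 0) := by
  have hcurv (m : M) : nab1 (nab m) = -j (Θ (θ m)) := by
    rw [← hθ, nab1_ι_eq_neg_j_Θ hγ hnab1 hι hθ hΘ hj]
  simp only [hcurv, neg_eq_zero, hjinj.eq_iff' (map_zero j)]

theorem statement4 (A B : Type*) [CommRing A] [CommRing B] [Algebra A B]
    (lam : A)
    (M : Type*) [AddCommGroup M] [Module B M] [Module A M] [IsScalarTower A B M]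
    (Ω1 Ω2 : Type*) [AddCommGroup Ω1] [Module B Ω1] [Module A Ω1]
    [IsScalarTower A B Ω1] [AddCommGroup Ω2] [Module B Ω2] [Module A Ω2]
    [IsScalarTower A B Ω2]
    (d0 : Derivation A B Ω1)
    (wedge : Ω1 →ₗ[B] Ω1 →ₗ[B] Ω2) (halt : ∀ ω : Ω1, wedge ω ω = 0)
    (d1 : Ω1 →ₗ[A] Ω2)
    (hd1Leib : ∀ (b : B) (ω : Ω1), d1 (b • ω) = b • d1 ω + wedge (d0 b) ω)
    (E Λ2E : Type*) [AddCommGroup E] [Module A E] [AddCommGroup Λ2E]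
    [Module A Λ2E]
    (wE : E →ₗ[A] E →ₗ[A] Λ2E) (haltE : ∀ e : E, wE e e = 0)
    -- γ : E ⊗_A B ≅ Ω1, carrying the constant forms to closed forms
    (γ : (B ⊗[A] E) ≃ₗ[B] Ω1)
    (hγ : ∀ e : E, d1 (γ (1 ⊗ₜ e)) = 0)
    -- the λ-connection
    (nab : M →ₗ[A] Ω1 ⊗[B] M)
    (hLeib : ∀ (b : B) (m : M),
      nab (b • m) = algebraMap A B lam • (d0 b ⊗ₜ m) + b • nab m)
    -- its extension to 1-forms
    (nab1 : Ω1 ⊗[B] M →ₗ[A] Ω2 ⊗[B] M)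
    (hnab1 : ∀ (ω : Ω1) (m : M),
      nab1 (ω ⊗ₜ m) = algebraMap A B lam • (d1 ω ⊗ₜ m)
        - (LinearMap.rTensor M (wedge ω)) (nab m))
    -- the Higgs field induced from ∇ via γ
    (ι : (E ⊗[A] M) →ₗ[A] (Ω1 ⊗[B] M))
    (hι : ∀ (e : E) (m : M), ι (e ⊗ₜ m) = γ (1 ⊗ₜ e) ⊗ₜ m)
    (hιbij : Function.Bijective ι)
    (θ : M →ₗ[A] E ⊗[A] M)
    (hθ : ∀ m : M, ι (θ m) = nab m)
    -- the wedge-extension of θ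
    (Θ : (E ⊗[A] M) →ₗ[A] (Λ2E ⊗[A] M))
    (hΘ : ∀ (e : E) (m : M),
      Θ (e ⊗ₜ m) = (LinearMap.rTensor M (wE e)) (θ m))
    -- compatibility of the two wedge products under γ
    (j : (Λ2E ⊗[A] M) →ₗ[A] (Ω2 ⊗[B] M))
    (hj : ∀ (e f : E) (m : M),
      j ((wE e f) ⊗ₜ m) = (wedge (γ (1 ⊗ₜ e)) (γ (1 ⊗ₜ f))) ⊗ₜ m)
    (hjinj : Function.Injective j) :
    -- ∇ is integrable iff θ is a Higgs field
    (∀ m : M, nab1 (nab m) = 0) ↔ (∀ m : M, Θ (θ m) = 0) :=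
  statement4_general A B lam M Ω1 Ω2 wedge d1 E Λ2E wE γ hγ nab nab1 hnab1 ι hι θ hθ Θ hΘ j hj hjinj
end

section
/- Let A be a commutative ring, B an A-algebra, λ ∈ A, and (M, N, u, ∇) a λ-isoconnexion: u : M → N is a B-linear isogeny and ∇ : M → Ω¹_{B/A} ⊗_B N is A-linear with ∇(xt) = λ·d(x) ⊗ u(t) + x·∇(t) for x ∈ B, t ∈ M. Then for any B-linear map v : N → M and integer n with u∘v = n·id_N and v∘u = n·id_M, the pairs (M, (id⊗v)∘∇) and (N, ∇∘v) are modules with (nλ)-connection, and u is a morphism of modules with (nλ)-connection from (M, (id⊗v)∘∇) to (N, ∇∘v). -/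
open KaehlerDifferential TensorProduct

namespace KaehlerDifferential

variable {A B : Type*} [CommRing A] [CommRing B] [Algebra A B]
  {P Q R : Type*} [AddCommGroup P] [Module B P] [AddCommGroup Q] [Module B Q]
  [AddCommGroup R] [Module B R]

/-- The rule of a `λ`-isoconnexion with isogeny `u`; for `u = id` it is a `λ`-connection. -/
def TwistedLeibniz (lam : A) (u : P →ₗ[B] Q) (nab : P → Ω[B⁄A] ⊗[B] Q) : Prop :=
  ∀ (x : B) (t : P), nab (x • t) = algebraMap A B lam • (D A B x ⊗ₜ[B] u t) + x • nab t

namespace TwistedLeibniz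

variable {lam : A} {u : P →ₗ[B] Q} {nab : P → Ω[B⁄A] ⊗[B] Q}

theorem comp_right (h : TwistedLeibniz lam u nab) (w : R →ₗ[B] P) :
    TwistedLeibniz lam (u ∘ₗ w) (nab ∘ w) := fun x s => by
  simp only [Function.comp_apply, map_smul, h x (w s), LinearMap.comp_apply]

theorem lTensor_comp (h : TwistedLeibniz lam u nab) (w : Q →ₗ[B] R) :
    TwistedLeibniz lam (w ∘ₗ u) (LinearMap.lTensor (Ω[B⁄A]) w ∘ nab) := fun x t => by
  simp only [Function.comp_apply, h x t, map_add, map_smul, LinearMap.lTensor_tmul,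
    LinearMap.comp_apply]

theorem of_eq_zsmul {u' : P →ₗ[B] Q} (h : TwistedLeibniz lam u nab) (n : ℤ)
    (hu : ∀ t, u t = n • u' t) : TwistedLeibniz (n • lam) u' nab := fun x t => by
  rw [h x t, hu t, tmul_smul, smul_comm, map_zsmul, smul_assoc]

end TwistedLeibniz

end KaehlerDifferential

theorem LinearMap.lTensor_lTensor_of_comp_eq_zsmul {R M N P : Type*} [CommRing R]
    [AddCommGroup M] [Module R M] [AddCommGroup N] [Module R N] [AddCommGroup P] [Module R P]
    {u : N →ₗ[R] P} {v : P →ₗ[R] N} {n : ℤ} (huv : ∀ s, u (v s) = n • s) (ω : M ⊗[R] P) :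
    lTensor M u (lTensor M v ω) = n • ω := by
  induction ω using TensorProduct.induction_on with
  | zero => simp
  | tmul a b => simp [huv b, tmul_smul]
  | add x y hx hy => simp [hx, hy]

theorem statement5_general (A B : Type*) [CommRing A] [CommRing B] [Algebra A B]
    (M N : Type*) [AddCommGroup M] [Module B M] [Module A M] [IsScalarTower A B M]
    [AddCommGroup N] [Module B N] [Module A N] [IsScalarTower A B N]
    (lam : A)
    (u : M →ₗ[B] N) (nab : M →ₗ[A] (Ω[B⁄A] ⊗[B] N))
    -- twisted Leibniz rule for nab
    (hLeib : ∀ (x : B) (t : M),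
      nab (x • t) = algebraMap A B lam • ((KaehlerDifferential.D A B) x ⊗ₜ[B] u t)
        + x • nab t)
    -- now fix v and n as in the statement
    (v : N →ₗ[B] M) (n : ℤ)
    (huv : ∀ s : N, u (v s) = n • s) (hvu : ∀ t : M, v (u t) = n • t) :
    -- (M, (id⊗v)∘nab) is a module with (nλ)-connection
    (∀ (x : B) (t : M),
        (LinearMap.lTensor (Ω[B⁄A]) v) (nab (x • t)) =
          algebraMap A B (n • lam) • ((KaehlerDifferential.D A B) x ⊗ₜ[B] t)
            + x • (LinearMap.lTensor (Ω[B⁄A]) v) (nab t))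
    -- (N, nab∘v) is a module with (nλ)-connection
    ∧ (∀ (x : B) (s : N),
        nab (v (x • s)) =
          algebraMap A B (n • lam) • ((KaehlerDifferential.D A B) x ⊗ₜ[B] s)
            + x • nab (v s))
    -- u is a morphism of modules with (nλ)-connection
    ∧ (∀ t : M,
        (LinearMap.lTensor (Ω[B⁄A]) u) ((LinearMap.lTensor (Ω[B⁄A]) v) (nab t)) =
          nab (v (u t))) := by
  have h : TwistedLeibniz lam u nab := hLeib
  refine ⟨(h.lTensor_comp v).of_eq_zsmul n (u' := LinearMap.id) hvu,
    (h.comp_right v).of_eq_zsmul n (u' := LinearMap.id) huv, fun t => ?_⟩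
  rw [LinearMap.lTensor_lTensor_of_comp_eq_zsmul huv, hvu t, map_zsmul]

theorem statement5 (A B : Type*) [CommRing A] [CommRing B] [Algebra A B]
    (M N : Type*) [AddCommGroup M] [Module B M] [Module A M] [IsScalarTower A B M]
    [AddCommGroup N] [Module B N] [Module A N] [IsScalarTower A B N]
    (lam : A)
    (u : M →ₗ[B] N) (nab : M →ₗ[A] (Ω[B⁄A] ⊗[B] N))
    -- u is an isogeny of B-modules
    (hiso : ∃ (v : N →ₗ[B] M) (n : ℤ), n ≠ 0 ∧ (∀ t : M, v (u t) = n • t) ∧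
      (∀ s : N, u (v s) = n • s))
    -- twisted Leibniz rule for nab
    (hLeib : ∀ (x : B) (t : M),
      nab (x • t) = algebraMap A B lam • ((KaehlerDifferential.D A B) x ⊗ₜ[B] u t)
        + x • nab t)
    -- now fix v and n as in the statement
    (v : N →ₗ[B] M) (n : ℤ)
    (huv : ∀ s : N, u (v s) = n • s) (hvu : ∀ t : M, v (u t) = n • t) :
    -- (M, (id⊗v)∘nab) is a module with (nλ)-connection
    (∀ (x : B) (t : M),
        (LinearMap.lTensor (Ω[B⁄A]) v) (nab (x • t)) =
          algebraMap A B (n • lam) • ((KaehlerDifferential.D A B) x ⊗ₜ[B] t)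
            + x • (LinearMap.lTensor (Ω[B⁄A]) v) (nab t))
    -- (N, nab∘v) is a module with (nλ)-connection
    ∧ (∀ (x : B) (s : N),
        nab (v (x • s)) =
          algebraMap A B (n • lam) • ((KaehlerDifferential.D A B) x ⊗ₜ[B] s)
            + x • nab (v s))
    -- u is a morphism of modules with (nλ)-connection
    ∧ (∀ t : M,
        (LinearMap.lTensor (Ω[B⁄A]) u) ((LinearMap.lTensor (Ω[B⁄A]) v) (nab t)) =
          nab (v (u t))) :=
  statement5_general A B M N lam u nab hLeib v n huv hvu
end

section
/- Let A be a commutative ring, and let 0 → A → F → E → 0 be an extension of A-modules with E projective. Then for every integer n ≥ 1 there is a natural short exact sequence of A-modules 0 → Sym^{n-1}_A(F) → Sym^n_A(F) → Sym^n_A(E) → 0, where the first map is multiplication by the image of 1 ∈ A in F and the second is induced by F → E. -/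
open PiTensorProduct
open scoped TensorProduct

/-!
STATEMENT 8: For an extension 0 → A → F → E → 0 of A-modules with E projective,
and every n ≥ 1, there is a natural short exact sequence
0 → Sym^{n-1}(F) → Sym^n(F) → Sym^n(E) → 0, where the first map is
multiplication by the image e ∈ F of 1 ∈ A and the second is induced by F → E.
Symmetric powers are realized concretely as quotients of n-fold tensor powers
by the permutation action.
-/

variable (A : Type*) [CommRing A]

/-- The symmetrization relations inside the n-th tensor power. -/
def symRel (M : Type*) [AddCommGroup M] [Module A M] (n : ℕ) :
    Submodule A (⨂[A] _ : Fin n, M) :=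
  Submodule.span A
    {x | ∃ (σ : Equiv.Perm (Fin n)) (t : ⨂[A] _ : Fin n, M),
      x = t - reindex A (fun _ => M) σ t}

/-- The n-th symmetric power of `M`, as a quotient of the n-th tensor power. -/
def SymPow (M : Type*) [AddCommGroup M] [Module A M] (n : ℕ) :=
  (⨂[A] _ : Fin n, M) ⧸ symRel A M n

noncomputable instance (M : Type*) [AddCommGroup M] [Module A M] (n : ℕ) :
    AddCommGroup (SymPow A M n) :=
  inferInstanceAs (AddCommGroup ((⨂[A] _ : Fin n, M) ⧸ symRel A M n))

noncomputable instance (M : Type*) [AddCommGroup M] [Module A M] (n : ℕ) :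
    Module A (SymPow A M n) :=
  inferInstanceAs (Module A ((⨂[A] _ : Fin n, M) ⧸ symRel A M n))

/-- Functoriality: Sym^n of a linear map. -/
noncomputable def SymPow.map {M N : Type*} [AddCommGroup M] [Module A M]
    [AddCommGroup N] [Module A N] (f : M →ₗ[A] N) (n : ℕ) :
    SymPow A M n →ₗ[A] SymPow A N n :=
  Submodule.mapQ (symRel A M n) (symRel A N n) (PiTensorProduct.map fun _ => f)
    (by
      rw [symRel, Submodule.span_le]
      rintro x ⟨σ, t, rfl⟩
      have h : PiTensorProduct.map (fun _ : Fin n => f)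
            (reindex A (fun _ => M) σ t) =
          reindex A (fun _ => N) σ (PiTensorProduct.map (fun _ : Fin n => f) t) := by
        simpa using PiTensorProduct.map_reindex (fun _ : Fin n => f) σ t
      simp only [SetLike.mem_coe, Submodule.mem_comap, map_sub, h]
      exact Submodule.subset_span ⟨σ, PiTensorProduct.map (fun _ => f) t, rfl⟩)

/-- Insertion of a fixed vector `e`, as a multilinear map:
(m₁,…,m_n) ↦ e ⊗ m₁ ⊗ ⋯ ⊗ m_n. -/
noncomputable def insertMultilinear {M : Type*} [AddCommGroup M] [Module A M]
    (e : M) (n : ℕ) :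
    MultilinearMap A (fun _ : Fin n => M) (⨂[A] _ : Fin (n + 1), M) :=
  (PiTensorProduct.tprod A (s := fun _ : Fin (n + 1) => M)).curryLeft e

/-- Multiplication by `e` : Sym^n(M) → Sym^{n+1}(M). -/
noncomputable def SymPow.mulByE {M : Type*} [AddCommGroup M] [Module A M]
    (e : M) (n : ℕ) : SymPow A M n →ₗ[A] SymPow A M (n + 1) :=
  Submodule.mapQ (symRel A M n) (symRel A M (n + 1))
    (PiTensorProduct.lift (insertMultilinear A e n)) (by
      classical
      rw [symRel, Submodule.span_le]
      rintro x ⟨σ, t, rfl⟩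
      set σ' : Equiv.Perm (Fin (n + 1)) := Equiv.Perm.decomposeFin.symm (0, σ)
      have key : ∀ u : ⨂[A] _ : Fin n, M,
          PiTensorProduct.lift (insertMultilinear A e n)
              (reindex A (fun _ => M) σ u) =
            reindex A (fun _ => M) σ'
              (PiTensorProduct.lift (insertMultilinear A e n) u) := by
        intro u
        induction u using PiTensorProduct.induction_on with
        | smul_tprod c v =>
          simp only [map_smul, reindex_tprod, lift.tprod]
          congr 1
          show PiTensorProduct.tprod A (Fin.cons e fun i => v (σ.symm i)) =
            reindex A (fun _ => M) σ' (PiTensorProduct.tprod A (Fin.cons e v))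
          rw [reindex_tprod]
          congr 1
          funext j
          have hz : σ' 0 = 0 := by
            simp [σ']
          have hs : ∀ i : Fin n, σ' i.succ = (σ i).succ := by
            intro i; simp [σ']
          have hz' : σ'.symm 0 = 0 := by
            rw [Equiv.symm_apply_eq]; exact hz.symm
          have hs' : ∀ j : Fin n, σ'.symm j.succ = (σ.symm j).succ := by
            intro j; rw [Equiv.symm_apply_eq, hs, Equiv.apply_symm_apply]
          refine Fin.cases ?_ (fun i => ?_) j
          · rw [hz']; simp
          · rw [hs']; simp
        | add a b ha hb => simp [map_add, ha, hb]
      simp only [SetLike.mem_coe, Submodule.mem_comap, map_sub, key]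
      exact Submodule.subset_span ⟨σ', _, rfl⟩)


/-!
Choose a section `s` of `π`, put `e = ι 1`, `p = s ∘ π`, and let `r : F → A` be the retraction
with `ι (r x) = x - p x`, so that `x = r x • e + p x`. The "division by `e`"
`Sym^{n+1} F → Sym^n F`,
  `v₀ ⋯ vₙ ↦ ∑ⱼ r(vⱼ) • p(v₀) ⋯ p(vⱼ₋₁) vⱼ₊₁ ⋯ vₙ`,
is invariant under adjacent transpositions (expand the two exchanged factors along
`x = r x • e + p x`), hence well defined. It is a left inverse of multiplication by `e`, and
multiplying it back by `e` telescopes: `e · D z + Sym(p) z = z`. As `Sym(p) = Sym(s) ∘ Sym(π)`,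
every `z` killed by `Sym(π)` is `e · D z`.
-/

namespace SymPow

variable {A}
variable {M N P : Type*} [AddCommGroup M] [Module A M] [AddCommGroup N] [Module A N]
  [AddCommGroup P] [Module A P]

noncomputable def mk (n : ℕ) : (⨂[A] _ : Fin n, M) →ₗ[A] SymPow A M n :=
  (symRel A M n).mkQ

lemma linearMap_ext {n : ℕ} {f g : SymPow A M n →ₗ[A] N}
    (h : ∀ v : Fin n → M, f (mk n (tprod A v)) = g (mk n (tprod A v))) : f = g :=
  Submodule.linearMap_qext _ (PiTensorProduct.ext (MultilinearMap.ext h))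

lemma mk_tprod_comp_perm {n : ℕ} (w : Fin n → M) (σ : Equiv.Perm (Fin n)) :
    mk n (tprod A (w ∘ σ)) = mk n (tprod A w) := by
  refine (Submodule.Quotient.eq _).mpr (Submodule.subset_span ⟨σ, tprod A (w ∘ σ), ?_⟩)
  simp [reindex_tprod]

lemma mk_tprod_comp_eq_of_range_eq {m n : ℕ} {f g : Fin m → Fin n} (hf : f.Injective)
    (hg : g.Injective) (h : Set.range f = Set.range g) (w : Fin n → M) :
    mk m (tprod A (w ∘ f)) = mk m (tprod A (w ∘ g)) := by
  let τ : Equiv.Perm (Fin m) :=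
    (Equiv.ofInjective f hf).trans ((Equiv.setCongr h).trans (Equiv.ofInjective g hg).symm)
  have hτ : g ∘ τ = f := funext fun i => by simp [τ, Equiv.apply_ofInjective_symm]
  rw [← hτ, ← Function.comp_assoc, mk_tprod_comp_perm]

lemma map_mk_tprod (f : M →ₗ[A] N) {n : ℕ} (v : Fin n → M) :
    SymPow.map A f n (mk n (tprod A v)) = mk n (tprod A (f ∘ v)) :=
  congrArg (mk n) (PiTensorProduct.map_tprod (fun _ => f) v)

lemma map_comp (g : N →ₗ[A] P) (f : M →ₗ[A] N) (n : ℕ) :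
    SymPow.map A (g ∘ₗ f) n = SymPow.map A g n ∘ₗ SymPow.map A f n :=
  linearMap_ext fun v => by simp only [LinearMap.comp_apply, map_mk_tprod]; rfl

lemma map_id (n : ℕ) : SymPow.map A (LinearMap.id : M →ₗ[A] M) n = LinearMap.id :=
  linearMap_ext fun v => by simp only [map_mk_tprod]; rfl

lemma mulByE_mk_tprod (e : M) {n : ℕ} (w : Fin n → M) :
    mulByE A e n (mk n (tprod A w)) = mk (n + 1) (tprod A (Fin.cons e w)) :=
  congrArg (mk (n + 1)) (lift.tprod w)

lemma map_comp_mulByE_eq_zero (f : M →ₗ[A] N) {e : M} (he : f e = 0) (n : ℕ) :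
    SymPow.map A f (n + 1) ∘ₗ mulByE A e n = 0 :=
  linearMap_ext fun w => by
    have : tprod A (f ∘ Fin.cons e w) = 0 := MultilinearMap.map_coord_zero _ 0 (by simpa using he)
    simp only [LinearMap.comp_apply, mulByE_mk_tprod, map_mk_tprod, this, map_zero,
      LinearMap.zero_apply]

variable {F : Type*} [AddCommGroup F] [Module A F] (p : F →ₗ[A] F) (r : F →ₗ[A] A)

def projBelow {k : ℕ} (m : ℕ) (v : Fin k → F) : Fin k → F :=
  fun i => if (i : ℕ) < m then p (v i) else v i

lemma projBelow_zero {k : ℕ} (v : Fin k → F) : projBelow p 0 v = v :=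
  funext fun _ => if_neg (Nat.not_lt_zero _)

lemma projBelow_of_le {k m : ℕ} (hm : k ≤ m) (v : Fin k → F) : projBelow p m v = p ∘ v :=
  funext fun i => if_pos (i.isLt.trans_le hm)

lemma projBelow_succ {k : ℕ} (j : Fin k) (v : Fin k → F) :
    projBelow p ((j : ℕ) + 1) v = Function.update (projBelow p j v) j (p (v j)) := by
  funext i
  rcases eq_or_ne i j with rfl | h
  · simp [projBelow]
  · have : (i : ℕ) ≠ j := Fin.val_ne_of_ne h
    simp only [projBelow, Function.update_of_ne h]
    split_ifs <;> first | rfl | omega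

lemma projBelow_comp_swap {k m : ℕ} {a b : Fin k} (h : (a : ℕ) < m ↔ (b : ℕ) < m)
    (v : Fin k → F) :
    projBelow p m (v ∘ Equiv.swap a b) = projBelow p m v ∘ Equiv.swap a b := by
  funext i
  simp only [projBelow, Function.comp_apply, Equiv.swap_apply_def]
  split_ifs <;> simp_all <;> omega

-- The tuples in the `k`-th and `(k+1)`-st terms of the contraction differ only in slot `k`.
lemma removeNth_projBelow_adjacent {n : ℕ} (k : Fin n) (v : Fin (n + 1) → F) :
    let W := k.castSucc.removeNth (projBelow p k.castSucc v)
    let σ := Equiv.swap k.castSucc k.succ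
    W = Function.update W k (v k.succ) ∧
    k.castSucc.removeNth (projBelow p k.castSucc (v ∘ σ)) = Function.update W k (v k.castSucc) ∧
    k.succ.removeNth (projBelow p k.succ v) = Function.update W k (p (v k.castSucc)) ∧
    k.succ.removeNth (projBelow p k.succ (v ∘ σ)) = Function.update W k (p (v k.succ)) := by
  refine ⟨?_, ?_, ?_, ?_⟩ <;> try funext i
  all_goals
    simp only [Fin.removeNth, projBelow, Function.update, Fin.succAbove, Function.comp_apply,
      Equiv.swap_apply_def, Fin.lt_def, Fin.ext_iff, Fin.val_castSucc, Fin.val_succ,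
      eq_rec_constant, dite_eq_ite]
    split_ifs <;> simp only [Fin.val_castSucc, Fin.val_succ] at * <;>
      first | omega | (congr 2; exact Fin.ext ‹_›)

noncomputable def contractMultilinear (n : ℕ) :
    MultilinearMap A (fun _ : Fin (n + 1) => F) (SymPow A F n) :=
  ∑ j : Fin (n + 1),
    (LinearMap.uncurryMid j (r.smulRight ((mk n).compMultilinearMap (tprod A)))).compLinearMap
      fun i : Fin (n + 1) => if (i : ℕ) < j then p else LinearMap.id

lemma contractMultilinear_apply {n : ℕ} (v : Fin (n + 1) → F) :
    contractMultilinear p r n v =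
      ∑ j : Fin (n + 1), r (v j) • mk n (tprod A (j.removeNth (projBelow p j v))) := by
  simp only [contractMultilinear, sum_apply, MultilinearMap.compLinearMap_apply,
    LinearMap.uncurryMid_apply]
  refine Finset.sum_congr rfl fun j _ => ?_
  have : (fun i : Fin (n + 1) => (if (i : ℕ) < j then p else LinearMap.id) (v i)) =
      projBelow p j v :=
    funext fun i => by simp only [projBelow]; split_ifs <;> rfl
  rw [this]
  simp

section

variable {p r} {e : F} (hpr : ∀ x, r x • e + p x = x)
include hpr

lemma mk_tprod_update {n : ℕ} (w : Fin n → F) (i : Fin n) (x : F) :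
    mk n (tprod A (Function.update w i x)) =
      r x • mk n (tprod A (Function.update w i e)) +
        mk n (tprod A (Function.update w i (p x))) := by
  conv_lhs => rw [← hpr x]
  rw [MultilinearMap.map_update_add, MultilinearMap.map_update_smul, map_add, map_smul]

lemma contractMultilinear_comp_swap {n : ℕ} (k : Fin n) (v : Fin (n + 1) → F) :
    contractMultilinear p r n (v ∘ Equiv.swap k.castSucc k.succ) =
      contractMultilinear p r n v := by
  set a := k.castSucc
  set b := k.succ
  have hab : a ≠ b := Fin.castSucc_lt_succ.ne
  simp only [contractMultilinear_apply]
  rw [← Finset.sum_sdiff (Finset.subset_univ {a, b}), Finset.sum_pair hab,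
    ← Finset.sum_sdiff (Finset.subset_univ {a, b}), Finset.sum_pair hab]
  congr 1
  · refine Finset.sum_congr rfl fun j hj => ?_
    obtain ⟨hja, hjb⟩ : j ≠ a ∧ j ≠ b := by simpa [not_or] using hj
    have hside : (a : ℕ) < j ↔ (b : ℕ) < j := by
      have := Fin.val_ne_of_ne hja
      have := Fin.val_ne_of_ne hjb
      simp only [a, b, Fin.val_castSucc, Fin.val_succ] at *
      omega
    have hrange : Set.range (Equiv.swap a b ∘ j.succAbove) = Set.range j.succAbove := by
      rw [Set.range_comp, Fin.range_succAbove, Set.image_compl_eq (Equiv.bijective _),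
        Set.image_singleton, Equiv.swap_apply_of_ne_of_ne hja hjb]
    rw [Function.comp_apply, Equiv.swap_apply_of_ne_of_ne hja hjb, projBelow_comp_swap p hside]
    congr 1
    exact mk_tprod_comp_eq_of_range_eq ((Equiv.injective _).comp (Fin.succAbove_right_injective))
      Fin.succAbove_right_injective hrange _
  · obtain ⟨h₀, h₁, h₂, h₃⟩ := removeNth_projBelow_adjacent p k v
    rw [h₀, h₁, h₂, h₃, Function.comp_apply, Function.comp_apply, Equiv.swap_apply_left,
      Equiv.swap_apply_right,
      mk_tprod_update hpr _ _ (v a), mk_tprod_update hpr _ _ (v b)]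
    module

lemma contractMultilinear_comp_perm {n : ℕ} (σ : Equiv.Perm (Fin (n + 1)))
    (v : Fin (n + 1) → F) :
    contractMultilinear p r n (v ∘ σ) = contractMultilinear p r n v := by
  have hσ : σ ∈ Submonoid.closure (Set.range fun k : Fin n => Equiv.swap k.castSucc k.succ) := by
    rw [Equiv.Perm.mclosure_swap_castSucc_succ]; trivial
  induction hσ using Submonoid.closure_induction generalizing v with
  | mem τ hτ =>
    obtain ⟨k, rfl⟩ := hτ
    exact contractMultilinear_comp_swap hpr k v
  | one => rfl
  | mul σ₁ σ₂ _ _ ih₁ ih₂ =>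
    rw [Equiv.Perm.coe_mul, ← Function.comp_assoc, ih₂, ih₁]

lemma symRel_le_ker_lift_contractMultilinear (n : ℕ) :
    symRel A F (n + 1) ≤ LinearMap.ker (lift (contractMultilinear p r n)) := by
  rw [symRel, Submodule.span_le]
  rintro _ ⟨σ, t, rfl⟩
  have : lift (contractMultilinear p r n) ∘ₗ (reindex A (fun _ => F) σ).toLinearMap =
      lift (contractMultilinear p r n) :=
    PiTensorProduct.ext <| MultilinearMap.ext fun v => by
      simp only [LinearMap.compMultilinearMap_apply, LinearMap.comp_apply, LinearEquiv.coe_coe,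
        reindex_tprod, lift.tprod]
      exact contractMultilinear_comp_perm hpr σ.symm v
  simp [(LinearMap.congr_fun this t).symm]

omit hpr in
noncomputable def contract (hpr : ∀ x, r x • e + p x = x) (n : ℕ) :
    SymPow A F (n + 1) →ₗ[A] SymPow A F n :=
  (symRel A F (n + 1)).liftQ _ (symRel_le_ker_lift_contractMultilinear hpr n)

lemma contract_mk_tprod {n : ℕ} (v : Fin (n + 1) → F) :
    contract hpr n (mk (n + 1) (tprod A v)) = contractMultilinear p r n v :=
  (Submodule.liftQ_apply _ _ _).trans (lift.tprod v)

lemma contract_comp_mulByE (hre : r e = 1) (n : ℕ) :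
    contract hpr n ∘ₗ mulByE A e n = LinearMap.id := by
  have hpe : p e = 0 := by simpa [hre] using hpr e
  refine linearMap_ext fun w => ?_
  rw [LinearMap.comp_apply, mulByE_mk_tprod, contract_mk_tprod, contractMultilinear_apply,
    Fin.sum_univ_succ, Finset.sum_eq_zero, add_zero]
  · simp [hre, projBelow_zero]
  · intro j _
    have h0 : j.succ.succAbove ⟨0, j.pos⟩ = 0 :=
      Fin.succAbove_of_castSucc_lt _ _ (by simp [Fin.lt_def])
    have : tprod A (j.succ.removeNth (projBelow p j.succ (Fin.cons e w))) = 0 :=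
      MultilinearMap.map_coord_zero _ ⟨0, j.pos⟩ (by simp [Fin.removeNth, h0, projBelow, hpe])
    rw [this, map_zero, smul_zero]

lemma mulByE_comp_contract_add_map (n : ℕ) :
    mulByE A e n ∘ₗ contract hpr n + SymPow.map A p (n + 1) = LinearMap.id := by
  refine linearMap_ext fun v => ?_
  obtain ⟨G, hG⟩ : ∃ G : ℕ → SymPow A F (n + 1),
      ∀ m, G m = mk (n + 1) (tprod A (projBelow p m v)) := ⟨_, fun _ => rfl⟩
  have hterm (j : Fin (n + 1)) :
      mulByE A e n (r (v j) • mk n (tprod A (j.removeNth (projBelow p j v)))) =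
        G j - G (j + 1) := by
    have hins : mulByE A e n (mk n (tprod A (j.removeNth (projBelow p j v)))) =
        mk (n + 1) (tprod A (Function.update (projBelow p j v) j e)) := by
      rw [mulByE_mk_tprod, ← mk_tprod_comp_perm _ j.cycleRange, Fin.cons_comp_cycleRange,
        Fin.insertNth_removeNth]
    have hGj : mk (n + 1) (tprod A (projBelow p j v)) =
        mk (n + 1) (tprod A (Function.update (projBelow p j v) j (v j))) := by
      rw [← show projBelow p j v j = v j from if_neg (lt_irrefl _), Function.update_eq_self]
    rw [map_smul, hins, hG, hG, projBelow_succ, hGj, mk_tprod_update hpr _ _ (v j)]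
    abel
  calc mulByE A e n (contract hpr n (mk (n + 1) (tprod A v))) +
        SymPow.map A p (n + 1) (mk (n + 1) (tprod A v))
      = ∑ j : Fin (n + 1), (G j - G (j + 1)) + G (n + 1) := by
        rw [contract_mk_tprod, contractMultilinear_apply, map_sum, map_mk_tprod,
          hG, projBelow_of_le p le_rfl]
        exact congrArg (· + _) (Finset.sum_congr rfl fun j _ => hterm j)
    _ = G 0 := by
        rw [Fin.sum_univ_eq_sum_range (fun m => G m - G (m + 1)), Finset.sum_range_sub',
          sub_add_cancel]
    _ = mk (n + 1) (tprod A v) := by rw [hG, projBelow_zero]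

end

end SymPow

theorem statement8 (F E : Type*) [AddCommGroup F] [Module A F]
    [AddCommGroup E] [Module A E] [Module.Projective A E]
    (ι : A →ₗ[A] F) (π : F →ₗ[A] E)
    (hinj : Function.Injective ι) (hsurj : Function.Surjective π)
    (hexact : Function.Exact ι π) :
    -- for every n ≥ 1 (written n + 1), the sequence
    -- 0 → Sym^n(F) → Sym^{n+1}(F) → Sym^{n+1}(E) → 0 is exact
    ∀ n : ℕ,
      Function.Injective (SymPow.mulByE A (ι 1) n) ∧
      Function.Surjective (SymPow.map A π (n + 1)) ∧
      Function.Exact (SymPow.mulByE A (ι 1) n) (SymPow.map A π (n + 1)) := by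
  intro n
  obtain ⟨s, hs⟩ := Module.projective_lifting_property π LinearMap.id hsurj
  have hπe : π (ι 1) = 0 := hexact.apply_apply_eq_zero 1
  have hker (x : F) : x - s (π x) ∈ LinearMap.range ι :=
    (hexact _).mp (by rw [map_sub, ← LinearMap.comp_apply π s, hs, LinearMap.id_apply, sub_self])
  let r : F →ₗ[A] A :=
    (LinearEquiv.ofInjective ι hinj).symm ∘ₗ (LinearMap.id - s ∘ₗ π).codRestrict _ hker
  have hιr (x : F) : ι (r x) = x - s (π x) :=
    LinearEquiv.ofInjective_symm_apply ι (h := hinj) ⟨_, hker x⟩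
  have hpr (x : F) : r x • ι 1 + (s ∘ₗ π) x = x := by
    rw [← map_smul, smul_eq_mul, mul_one, hιr, LinearMap.comp_apply, sub_add_cancel]
  have hre : r (ι 1) = 1 := hinj (by rw [hιr, hπe, map_zero, sub_zero])
  refine ⟨Function.LeftInverse.injective (g := SymPow.contract hpr n)
    (LinearMap.congr_fun (SymPow.contract_comp_mulByE hpr hre n)), fun y => ?_, fun z => ?_⟩
  · refine ⟨SymPow.map A s (n + 1) y, ?_⟩
    rw [← LinearMap.comp_apply, ← SymPow.map_comp, hs, SymPow.map_id, LinearMap.id_apply]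
  · refine ⟨fun hz => ⟨SymPow.contract hpr n z, ?_⟩, ?_⟩
    · have hpz : SymPow.map A (s ∘ₗ π) (n + 1) z = 0 := by
        rw [SymPow.map_comp, LinearMap.comp_apply, hz, map_zero]
      simpa [hpz] using LinearMap.congr_fun (SymPow.mulByE_comp_contract_add_map hpr n) z
    · rintro ⟨y, rfl⟩
      exact LinearMap.congr_fun (SymPow.map_comp_mulByE_eq_zero π hπe n) y
end
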